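/- arXiv:1307.0635 — 7 statements merged into one kernel-verified Lean document; each statement's English description precedes it below -/
import Mathlib

section
/- The class E of extended energy functions, ordered pointwise, is a complete lattice whose bottom element is the constant-⊥ function and whose top element is the function ⊤̄ with ⊤̄(⊥)=⊥ and ⊤̄(x)=∞ for all x≠⊥; moreover, suprema in E are computed pointwise, i.e. for any index set I, any family (f_i)_{i∈I} in E, and any x ∈ [0,∞]_⊥, (sup_{i∈I} f_i)(x) = sup_{i∈I} f_i(x). -/
open scoped ENNReal NNReal

/-- `[0,∞]_⊥`: the nonnegative extended reals `[0,∞]` with a bottom element `⊥` adjoined. -/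
abbrev EnergyVal : Type := WithBot ℝ≥0∞

noncomputable instance : CompleteLattice EnergyVal :=
  inferInstanceAs (CompleteLattice (WithBot (WithTop ℝ≥0)))

/-- An extended energy function: `f ⊥ = ⊥`, `f x₂ ≥ f x₁ + x₂ - x₁` for `x₁ ≤ x₂`
(with `⊥ + c = ⊥`), and `f ∞ = ∞` unless `f` is constantly `⊥`. -/
def IsEnergyFunction (f : EnergyVal → EnergyVal) : Prop :=
  f ⊥ = ⊥ ∧
  (∀ x₁ x₂ : ℝ≥0∞, x₁ ≤ x₂ → f ↑x₁ + ↑(x₂ - x₁) ≤ f ↑x₂) ∧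
  ((∀ x, f x = ⊥) ∨ f ↑(⊤ : ℝ≥0∞) = ↑(⊤ : ℝ≥0∞))

/-- The constant-`⊥` function `⊥̄`. -/
def bbotFn : EnergyVal → EnergyVal := fun _ => ⊥

open Classical in
/-- The function `⊤̄` with `⊤̄ ⊥ = ⊥` and `⊤̄ x = ∞` for `x ≠ ⊥`. -/
noncomputable def ttopFn : EnergyVal → EnergyVal :=
  fun x => if x = ⊥ then ⊥ else ↑(⊤ : ℝ≥0∞)

open Classical in
/-- The star of an energy function: `f* ⊥ = ⊥`, `f* x = x` if `f x ≤ x`,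
and `f* x = ∞` if `f x > x`. -/
noncomputable def starFn (f : EnergyVal → EnergyVal) : EnergyVal → EnergyVal :=
  fun x => if x = ⊥ then ⊥ else if f x ≤ x then x else ↑(⊤ : ℝ≥0∞)

/-- The omega of an energy function, an element of the semimodule `V`
(Booleans identified with `Prop`): `f^ω x = true` iff `x ≠ ⊥` and `f x ≥ x`. -/
def omegaFn (f : EnergyVal → EnergyVal) : EnergyVal → Prop :=
  fun x => x ≠ ⊥ ∧ x ≤ f x

/-- Membership in the semimodule `V`: monotone maps `[0,∞]_⊥ → B` with `u ⊥ = false`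
(Booleans identified with `Prop`, ordered `false < true`). -/
def IsV (u : EnergyVal → Prop) : Prop := ¬ u ⊥ ∧ Monotone u

/-! Bottom, top and least upper bounds are all pointwise; the only real point is that a pointwise
supremum of energy functions still satisfies `f x₁ + (x₂ - x₁) ≤ f x₂`, i.e. that adding a constant
`c` to a supremum in `[0,∞]_⊥` is bounded by the bounds of the summands `a i + c`. -/

theorem ENNReal.withBot_add_coe_le_coe_iff {x : WithBot ℝ≥0∞} {c t : ℝ≥0∞} (hc : c ≠ ∞)
    (hct : c ≤ t) : x + c ≤ t ↔ x ≤ ↑(t - c) := by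
  induction x with
  | bot => simp
  | coe u => norm_cast; exact (ENNReal.le_sub_iff_add_le_right hc hct).symm

theorem ENNReal.withBot_iSup_add_coe_le {ι : Sort*} {a : ι → WithBot ℝ≥0∞} {c : ℝ≥0∞}
    {b : WithBot ℝ≥0∞} (h : ∀ i, a i + c ≤ b) : (⨆ i, a i) + c ≤ b := by
  by_cases hbot : ∀ i, a i = ⊥
  · simp [iSup_eq_bot.mpr hbot]
  push Not at hbot
  -- A summand `a j ≠ ⊥` forces `b` to be a number `t ≥ c`, so `· + c ≤ t` becomes `· ≤ t - c`.
  obtain ⟨j, hj⟩ := hbot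
  obtain ⟨u, hu⟩ := WithBot.ne_bot_iff_exists.mp hj
  have hj := h j
  rw [← hu] at hj
  obtain ⟨t, rfl⟩ := WithBot.ne_bot_iff_exists.mp (ne_bot_of_le_ne_bot (by simp) hj)
  rw [← WithBot.coe_add, WithBot.coe_le_coe] at hj
  by_cases hc : c = ∞
  · simp [top_le_iff.mp (hc ▸ le_add_self.trans hj)]
  have hct : c ≤ t := le_add_self.trans hj
  rw [ENNReal.withBot_add_coe_le_coe_iff hc hct]
  exact iSup_le fun i => (ENNReal.withBot_add_coe_le_coe_iff hc hct).mp (h i)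

theorem isEnergyFunction_bbotFn : IsEnergyFunction bbotFn :=
  ⟨rfl, fun _ _ _ => by simp [bbotFn], Or.inl fun _ => rfl⟩

theorem isEnergyFunction_ttopFn : IsEnergyFunction ttopFn :=
  ⟨by simp [ttopFn], fun _ _ _ => by simp [ttopFn], Or.inr (by simp [ttopFn])⟩

theorem IsEnergyFunction.le_ttopFn {f : EnergyVal → EnergyVal} (hf : IsEnergyFunction f)
    (x : EnergyVal) : f x ≤ ttopFn x := by
  unfold ttopFn
  split_ifs with hx
  · rw [hx, hf.1]
  · exact le_top

theorem IsEnergyFunction.iSup {ι : Sort*} {F : ι → EnergyVal → EnergyVal}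
    (hF : ∀ i, IsEnergyFunction (F i)) : IsEnergyFunction (fun x => ⨆ i, F i x) := by
  refine ⟨iSup_eq_bot.mpr fun i => (hF i).1, fun x₁ x₂ hx => ?_, ?_⟩
  · exact ENNReal.withBot_iSup_add_coe_le fun i =>
      ((hF i).2.1 x₁ x₂ hx).trans (le_iSup (fun i => F i x₂) i)
  · by_cases hbot : ∀ i x, F i x = ⊥
    · exact Or.inl fun x => iSup_eq_bot.mpr fun i => hbot i x
    push Not at hbot
    obtain ⟨i, x, hx⟩ := hbot
    have htop : F i ↑(⊤ : ℝ≥0∞) = ↑(⊤ : ℝ≥0∞) := (hF i).2.2.resolve_left fun h => hx (h x)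
    exact Or.inr (le_antisymm le_top (htop.ge.trans (le_iSup (fun i => F i ↑(⊤ : ℝ≥0∞)) i)))

/-- The class `E` of extended energy functions, ordered pointwise, is a complete lattice:
`⊥̄` and `⊤̄` are energy functions and are the least resp. greatest elements of `E`, and
`E` is closed under arbitrary pointwise suprema, which are least upper bounds
(i.e. suprema in `E` are computed pointwise). -/
theorem stmt0 :
    IsEnergyFunction bbotFn ∧
    IsEnergyFunction ttopFn ∧
    (∀ f : EnergyVal → EnergyVal, IsEnergyFunction f →
      (∀ x, bbotFn x ≤ f x) ∧ (∀ x, f x ≤ ttopFn x)) ∧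
    (∀ (ι : Type) (F : ι → EnergyVal → EnergyVal), (∀ i, IsEnergyFunction (F i)) →
      IsEnergyFunction (fun x => ⨆ i, F i x) ∧
      IsLUB {g | ∃ i, g = F i} (fun x => ⨆ i, F i x)) := by
  refine ⟨isEnergyFunction_bbotFn, isEnergyFunction_ttopFn,
    fun f hf => ⟨fun _ => bot_le, hf.le_ttopFn⟩, fun ι F hF => ⟨IsEnergyFunction.iSup hF, ?_⟩⟩
  have hset : {g | ∃ i, g = F i} = Set.range F := by ext; simp [eq_comm]
  have hsup : (fun x => ⨆ i, F i x) = ⨆ i, F i := funext fun x => (iSup_apply ..).symm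
  exact hset ▸ hsup ▸ isLUB_iSup
end

section
/- For any g ∈ E, there exists f ∈ E such that g = f* if, and only if, there exists k ∈ [0,∞]_⊥ such that g(x) = x for all x < k, g(x) = ∞ for all x > k, and either g(k) = k or g(k) = ∞. -/
open scoped ENNReal NNReal

/-! A star `f*` only takes the values `x` and `∞`. Since an energy function grows at least as
fast as the identity, `f x ≤ x` propagates downwards from finite points, so `{x | f* x = ∞}` is
an upper set and `k` is its infimum. Conversely, a `g` of the stated shape is its own star. -/

theorem IsUpperSet.exists_forall_lt_notMem_forall_gt_mem {α : Type*} [CompleteLinearOrder α]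
    {s : Set α} (hs : IsUpperSet s) : ∃ k, (∀ x < k, x ∉ s) ∧ ∀ x, k < x → x ∈ s :=
  ⟨sInf s, fun _ hx hxs => (sInf_le hxs).not_gt hx, fun _ hx =>
    let ⟨_, ha, hax⟩ := sInf_lt_iff.1 hx; hs hax.le ha⟩

theorem starFn_bot (f : EnergyVal → EnergyVal) : starFn f ⊥ = ⊥ := by
  simp [starFn]

theorem starFn_eq_self_or_eq_top (f : EnergyVal → EnergyVal) (x : EnergyVal) :
    starFn f x = x ∨ starFn f x = ↑(⊤ : ℝ≥0∞) := by
  unfold starFn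
  split_ifs <;> simp_all

theorem starFn_coe_ne_top_iff {f : EnergyVal → EnergyVal} {a : ℝ≥0∞} :
    starFn f ↑a ≠ ↑(⊤ : ℝ≥0∞) ↔ a ≠ ⊤ ∧ f ↑a ≤ ↑a := by
  unfold starFn
  split_ifs <;> simp_all

theorem IsEnergyFunction.le_self_of_le {f : EnergyVal → EnergyVal} (hf : IsEnergyFunction f)
    {x₁ x₂ : ℝ≥0∞} (h12 : x₁ ≤ x₂) (h2 : x₂ ≠ ⊤) (hfx₂ : f ↑x₂ ≤ ↑x₂) : f ↑x₁ ≤ ↑x₁ := by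
  induction hx₁ : f ↑x₁ using WithBot.recBotCoe with
  | bot => exact bot_le
  | coe a =>
    have hgrowth := (hf.2.1 x₁ x₂ h12).trans hfx₂
    rw [hx₁, ← WithBot.coe_add, WithBot.coe_le_coe] at hgrowth
    refine WithBot.coe_le_coe.2 <|
      (ENNReal.add_le_add_iff_right (ENNReal.sub_ne_top (b := x₁) h2)).1 ?_
    rwa [add_tsub_cancel_of_le h12]

theorem isUpperSet_starFn_eq_top {f : EnergyVal → EnergyVal} (hf : IsEnergyFunction f) :
    IsUpperSet {x | starFn f x = ↑(⊤ : ℝ≥0∞)} := by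
  intro a b hab
  contrapose
  induction b using WithBot.recBotCoe with
  | bot => simp [le_bot_iff.1 hab, starFn_bot]
  | coe b =>
    induction a using WithBot.recBotCoe with
    | bot => simp [starFn_bot]
    | coe a =>
      simp only [Set.mem_ofPred_eq, starFn_coe_ne_top_iff] at hab ⊢
      rintro ⟨hb, hfb⟩
      have hab := WithBot.coe_le_coe.1 hab
      exact ⟨ne_top_of_le_ne_top hb hab, hf.le_self_of_le hab hb hfb⟩

theorem starFn_eq_self {g : EnergyVal → EnergyVal} (hbot : g ⊥ = ⊥)
    (h : ∀ x, g x = x ∨ g x = ↑(⊤ : ℝ≥0∞)) : starFn g = g := by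
  funext x
  unfold starFn
  split_ifs with hx hle <;> rcases h x with hgx | hgx <;> simp_all

/-- An extended energy function `g` is of the form `f*` for some extended energy
function `f` if, and only if, there is `k ∈ [0,∞]_⊥` such that `g x = x` for all
`x < k`, `g x = ∞` for all `x > k`, and `g k = k` or `g k = ∞`. -/
theorem stmt4 (g : EnergyVal → EnergyVal) (hg : IsEnergyFunction g) :
    (∃ f : EnergyVal → EnergyVal, IsEnergyFunction f ∧ g = starFn f) ↔
    (∃ k : EnergyVal, (∀ x, x < k → g x = x) ∧ (∀ x, k < x → g x = ↑(⊤ : ℝ≥0∞)) ∧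
      (g k = k ∨ g k = ↑(⊤ : ℝ≥0∞))) := by
  constructor
  · rintro ⟨f, hf, rfl⟩
    obtain ⟨k, hlt, hgt⟩ := (isUpperSet_starFn_eq_top hf).exists_forall_lt_notMem_forall_gt_mem
    exact ⟨k, fun x hx => (starFn_eq_self_or_eq_top f x).resolve_right (hlt x hx), hgt,
      starFn_eq_self_or_eq_top f k⟩
  · rintro ⟨k, hlt, hgt, hk⟩
    refine ⟨g, hg, (starFn_eq_self hg.1 fun x => ?_).symm⟩
    rcases lt_trichotomy x k with hx | rfl | hx
    · exact .inl (hlt x hx)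
    · exact hk
    · exact .inr (hgt x hx)
end

section
/- For every extended energy function f ∈ E, f* = sup_{n∈ℕ} fⁿ, i.e. for every x ∈ [0,∞]_⊥, f*(x) = sup_{n∈ℕ} fⁿ(x). -/
/-! If `f x ≤ x` the iterates of the monotone map `f` decrease from `x`, so their supremum is `x`.
If `x < f x`, the energy inequality `f y ≥ f x + (y - x)` makes every step gain at least
`f x - x > 0`, so `fⁿ x ≥ x + n (f x - x)` and the supremum is `∞`. -/

open scoped ENNReal NNReal

theorem iSup_iterate_of_map_le {α : Type*} [CompleteLattice α] {f : α → α} (hf : Monotone f)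
    {x : α} (hx : f x ≤ x) : ⨆ n : ℕ, f^[n] x = x :=
  le_antisymm (iSup_le fun n => hf.antitone_iterate_of_map_le hx n.zero_le)
    (le_iSup (fun n => f^[n] x) 0)

namespace IsEnergyFunction

variable {f : EnergyVal → EnergyVal}

theorem monotone (hf : IsEnergyFunction f) : Monotone f := by
  intro x y hxy
  induction x using WithBot.recBotCoe with
  | bot => exact hf.1.symm ▸ bot_le
  | coe a =>
    induction y using WithBot.recBotCoe with
    | bot => exact absurd hxy (WithBot.not_coe_le_bot a)
    | coe c =>
      calc f ↑a ≤ f ↑a + ↑(c - a) := le_add_of_nonneg_right (WithBot.coe_nonneg.mpr zero_le)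
        _ ≤ f ↑c := hf.2.1 a c (WithBot.coe_le_coe.mp hxy)

theorem coe_add_mul_le_iterate (hf : IsEnergyFunction f) {a b : ℝ≥0∞} (ha : a ≠ ∞)
    (hab : a ≤ b) (hb : f ↑a = ↑b) (n : ℕ) : (↑(a + n * (b - a)) : EnergyVal) ≤ f^[n] ↑a := by
  induction n with
  | zero => simp
  | succ n ih =>
    have step : (↑(a + (n + 1 : ℕ) * (b - a)) : EnergyVal) ≤ f ↑(a + n * (b - a)) := by
      have h := hf.2.1 a (a + n * (b - a)) le_self_add
      rw [hb, ENNReal.add_sub_cancel_left ha, ← WithBot.coe_add] at h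
      refine le_trans (WithBot.coe_le_coe.mpr (le_of_eq ?_)) h
      calc a + (n + 1 : ℕ) * (b - a) = (a + (b - a)) + n * (b - a) := by push_cast; ring
        _ = b + n * (b - a) := by rw [add_tsub_cancel_of_le hab]
    rw [Function.iterate_succ_apply']
    exact step.trans (hf.monotone ih)

theorem iSup_iterate_eq_top (hf : IsEnergyFunction f) {a : ℝ≥0∞} (h : (a : EnergyVal) < f ↑a) :
    ⨆ n : ℕ, f^[n] ↑a = ⊤ := by
  have ha : a ≠ ∞ := by
    rintro rfl
    exact h.not_ge le_top
  obtain ⟨b, hb⟩ := WithBot.ne_bot_iff_exists.mp (ne_bot_of_gt h)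
  have hab : a < b := WithBot.coe_lt_coe.mp (hb ▸ h)
  have hgap : b - a ≠ 0 := (tsub_pos_of_lt hab).ne'
  refine iSup_eq_top.mpr fun c hc => ?_
  induction c using WithBot.recBotCoe with
  | bot => exact ⟨0, WithBot.bot_lt_coe a⟩
  | coe c =>
    obtain ⟨n, hn⟩ := ENNReal.exists_nat_mul_gt hgap (WithBot.coe_lt_coe.mp hc).ne
    refine ⟨n, lt_of_lt_of_le ?_ (hf.coe_add_mul_le_iterate ha hab.le hb.symm n)⟩
    exact WithBot.coe_lt_coe.mpr (hn.trans_le le_add_self)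

end IsEnergyFunction

/-- For every extended energy function `f`, `f* = sup_{n∈ℕ} fⁿ`, i.e. for every
`x ∈ [0,∞]_⊥`, `f* x = ⨆ n, fⁿ x`. -/
theorem stmt8 (f : EnergyVal → EnergyVal) (hf : IsEnergyFunction f) :
    starFn f = fun x => ⨆ n : ℕ, f^[n] x := by
  funext x
  induction x using WithBot.recBotCoe with
  | bot => simp [starFn, Function.iterate_fixed hf.1]
  | coe a =>
    by_cases hle : f ↑a ≤ ↑a
    · simp [starFn, hle, iSup_iterate_of_map_le hf.monotone hle]
    · simp only [starFn, WithBot.coe_ne_bot, if_false, if_neg hle]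
      exact (hf.iSup_iterate_eq_top (lt_of_not_ge hle)).symm
end

section
/- For all extended energy functions f, g ∈ E, (g ∘ f)^ω = (f ∘ g)^ω ∘ f. -/
open scoped ENNReal NNReal

/-!
Forward, `x ≤ g (f x)` gives `f x ≤ f (g (f x))` by monotonicity of `f`. Backward, if
`y := g (f x) < x` while `f x ≤ f y`, the slope condition `f y + (x - y) ≤ f x` leaves only
`f y = f x = ∞`; then `y = g ∞ = ∞`, which cannot lie below `x`.
-/

namespace IsEnergyFunction

variable {f : EnergyVal → EnergyVal}

theorem apply_top_of_apply_ne_bot (hf : IsEnergyFunction f) {x : EnergyVal} (hx : f x ≠ ⊥) :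
    f ↑(⊤ : ℝ≥0∞) = ↑(⊤ : ℝ≥0∞) :=
  hf.2.2.resolve_left fun h => hx (h x)

theorem apply_eq_top_of_lt_of_apply_le (hf : IsEnergyFunction f) {x y : EnergyVal} (hyx : y < x)
    (hxy : f x ≤ f y) (hy : f y ≠ ⊥) : f y = ↑(⊤ : ℝ≥0∞) := by
  have hy' : y ≠ ⊥ := fun h => hy (h ▸ hf.1)
  obtain ⟨a, rfl⟩ := WithBot.ne_bot_iff_exists.mp hy'
  obtain ⟨b, rfl⟩ := WithBot.ne_bot_iff_exists.mp (ne_bot_of_le_ne_bot hy' hyx.le)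
  obtain ⟨c, hc⟩ := WithBot.ne_bot_iff_exists.mp hy
  have hab : a < b := WithBot.coe_lt_coe.mp hyx
  have hslope : c + (b - a) ≤ c + 0 := by
    rw [add_zero, ← WithBot.coe_le_coe, WithBot.coe_add, hc]
    exact (hf.2.1 a b hab.le).trans hxy
  rw [← hc, WithBot.coe_inj]
  by_contra hc_top
  have hba : b ≤ a :=
    tsub_eq_zero_iff_le.mp (nonpos_iff_eq_zero.mp (ENNReal.le_of_add_le_add_left hc_top hslope))
  exact hab.not_ge hba

end IsEnergyFunction

/-- For all extended energy functions `f, g`: `(g ∘ f)^ω = (f ∘ g)^ω ∘ f`. -/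
theorem stmt11 (f g : EnergyVal → EnergyVal)
    (hf : IsEnergyFunction f) (hg : IsEnergyFunction g) :
    omegaFn (g ∘ f) = omegaFn (f ∘ g) ∘ f := by
  funext x
  simp only [omegaFn, Function.comp_apply, eq_iff_iff]
  constructor
  · rintro ⟨hx, hle⟩
    have hfx : f x ≠ ⊥ := fun h => hx (le_bot_iff.mp (hg.1 ▸ h ▸ hle))
    exact ⟨hfx, hf.monotone hle⟩
  · rintro ⟨hfx, hle⟩
    refine ⟨fun h => hfx (h ▸ hf.1), not_lt.mp fun hlt => ?_⟩
    set y := g (f x)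
    have hfy : f y ≠ ⊥ := ne_bot_of_le_ne_bot hfx hle
    have hfy_top := hf.apply_eq_top_of_lt_of_apply_le hlt hle hfy
    have hfx_top : f x = ↑(⊤ : ℝ≥0∞) := le_antisymm le_top (hfy_top ▸ hf.monotone hlt.le)
    have hy_top : y = ↑(⊤ : ℝ≥0∞) := by
      have hy : y ≠ ⊥ := fun h => hfy (h ▸ hf.1)
      simp only [y, hfx_top] at hy ⊢
      exact hg.apply_top_of_apply_ne_bot hy
    exact (hy_top ▸ hlt).not_ge le_top
end

section
/- For all extended energy functions f, g ∈ E, (f ∨ g)^ω = sup over all infinite sequences h₀, h₁, … with each h_i ∈ {f, g} of the infinite product Π_{i=0}^∞ h_i. -/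
open scoped ENNReal NNReal

/-- The orbit `x₀, x₁, x₂, …` with `x_{n+1} = F n x_n`. -/
def prodSeq (F : ℕ → EnergyVal → EnergyVal) (x : EnergyVal) : ℕ → EnergyVal
  | 0 => x
  | n + 1 => F n (prodSeq F x n)

/-- The infinite product `Π_{i=0}^∞ F i ∈ V`: `(Π F i) x₀` holds iff `x_n ≠ ⊥`
for all `n`, where `x_{n+1} = F n x_n`. -/
def iProd (F : ℕ → EnergyVal → EnergyVal) : EnergyVal → Prop :=
  fun x => ∀ n, prodSeq F x n ≠ ⊥

/-! The orbit of `x` under `f ⊔ g` is increasing when `x ≤ f x ⊔ g x`, and following at each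
step whichever of `f`, `g` attains the maximum reproduces it, so it never reaches `⊥`.
Conversely, if `f x ⊔ g x + δ ≤ x` with `δ > 0` and `x < ∞`, the energy inequality propagates
this gap to every `y ≤ x`, for `f` and `g` alike; any orbit built from `f` and `g` then loses
at least `δ` per step and must fall to `⊥` after finitely many steps. -/

namespace IsEnergyFunction

variable {f : EnergyVal → EnergyVal}

theorem eq_bot_of_ne_top (hf : IsEnergyFunction f) (htop : f ↑(⊤ : ℝ≥0∞) ≠ ↑(⊤ : ℝ≥0∞))
    (y : EnergyVal) : f y = ⊥ :=
  hf.2.2.resolve_right htop y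

theorem add_le_of_le (hf : IsEnergyFunction f) {x δ : ℝ≥0∞} (hx : x ≠ ⊤)
    (hgap : f ↑x + ↑δ ≤ ↑x) {y : EnergyVal} (hyx : y ≤ ↑x) : f y + ↑δ ≤ y := by
  rcases eq_or_ne y ⊥ with rfl | hy
  · rw [hf.1, WithBot.bot_add]
  lift y to ℝ≥0∞ using hy
  rcases eq_or_ne (f ↑y) ⊥ with hfy | hfy
  · rw [hfy, WithBot.bot_add]
    exact bot_le
  lift f ↑y to ℝ≥0∞ using hfy with z hz
  have hyx : y ≤ x := WithBot.coe_le_coe.mp hyx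
  have hgain : (z : EnergyVal) + ↑(x - y) ≤ f ↑x := hz ▸ hf.2.1 y x hyx
  have hchain : z + δ + (x - y) ≤ y + (x - y) := by
    rw [add_tsub_cancel_of_le hyx, add_right_comm, ← WithBot.coe_le_coe, WithBot.coe_add]
    exact le_trans (by rw [WithBot.coe_add]; gcongr) hgap
  exact WithBot.coe_le_coe.mpr
    ((ENNReal.add_le_add_iff_right (ne_top_of_le_ne_top hx tsub_le_self)).mp hchain)

end IsEnergyFunction

theorem exists_add_le_of_lt {m : EnergyVal} {x : ℝ≥0∞} (h : m < ↑x) :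
    ∃ δ : ℝ≥0∞, δ ≠ 0 ∧ m + ↑δ ≤ ↑x := by
  rcases eq_or_ne m ⊥ with rfl | hm
  · exact ⟨1, one_ne_zero, by rw [WithBot.bot_add]; exact bot_le⟩
  lift m to ℝ≥0∞ using hm
  have h : m < x := WithBot.coe_lt_coe.mp h
  refine ⟨x - m, (tsub_pos_of_lt h).ne', ?_⟩
  rw [← WithBot.coe_add, add_tsub_cancel_of_le h.le]

theorem prodSeq_eq_iterate {F : ℕ → EnergyVal → EnergyVal} {φ : EnergyVal → EnergyVal}
    {x : EnergyVal} (hF : ∀ n, F n (φ^[n] x) = φ (φ^[n] x)) (n : ℕ) :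
    prodSeq F x n = φ^[n] x := by
  induction n with
  | zero => rfl
  | succ n ih => rw [prodSeq, ih, hF, Function.iterate_succ_apply']

theorem prodSeq_add_mul_le {F : ℕ → EnergyVal → EnergyVal} {x : EnergyVal} {δ : ℝ≥0∞}
    (hF : ∀ n y, y ≤ x → F n y + ↑δ ≤ y) (n : ℕ) :
    prodSeq F x n + ↑(n * δ) ≤ x := by
  induction n with
  | zero => simp [prodSeq]
  | succ n ih =>
    have hle : prodSeq F x n ≤ x :=
      le_trans (le_add_of_nonneg_right (WithBot.coe_nonneg.mpr zero_le)) ih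
    calc prodSeq F x (n + 1) + ↑((n + 1 : ℕ) * δ)
        = F n (prodSeq F x n) + ↑δ + ↑(n * δ) := by
          rw [prodSeq, add_assoc, ← WithBot.coe_add]; push_cast; ring_nf
      _ ≤ prodSeq F x n + ↑(n * δ) := by gcongr; exact hF n _ hle
      _ ≤ x := ih

theorem not_iProd_of_add_le {F : ℕ → EnergyVal → EnergyVal} {x δ : ℝ≥0∞} (hx : x ≠ ⊤)
    (hδ : δ ≠ 0) (hF : ∀ n y, y ≤ ↑x → F n y + ↑δ ≤ y) : ¬ iProd F ↑x := by
  intro hprod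
  obtain ⟨n, hn⟩ := ENNReal.exists_nat_mul_gt hδ hx
  have hbound := prodSeq_add_mul_le hF n
  lift prodSeq F ↑x n to ℝ≥0∞ using hprod n with z
  exact hn.not_ge (le_add_self.trans (WithBot.coe_le_coe.mp hbound))

section

variable {f g : EnergyVal → EnergyVal}

theorem exists_iProd_of_omegaFn_sup (hf : IsEnergyFunction f) (hg : IsEnergyFunction g)
    {x : EnergyVal} (hx : omegaFn (fun y => f y ⊔ g y) x) :
    ∃ h : ℕ → EnergyVal → EnergyVal, (∀ i, h i = f ∨ h i = g) ∧ iProd h x := by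
  classical
  set φ : EnergyVal → EnergyVal := fun y => f y ⊔ g y
  let h : ℕ → EnergyVal → EnergyVal := fun n => if g (φ^[n] x) ≤ f (φ^[n] x) then f else g
  refine ⟨h, fun i => by unfold h; split_ifs <;> simp, fun n => ?_⟩
  have hstep : ∀ n, h n (φ^[n] x) = φ (φ^[n] x) := fun n => by
    unfold h φ
    split_ifs with hgf
    · exact (sup_eq_left.mpr hgf).symm
    · exact (sup_eq_right.mpr (le_of_not_ge hgf)).symm
  rw [prodSeq_eq_iterate hstep]
  have hφ : Monotone φ := hf.monotone.sup hg.monotone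
  exact ne_bot_of_le_ne_bot hx.1 (hφ.monotone_iterate_of_le_map hx.2 (Nat.zero_le n))

theorem omegaFn_sup_of_iProd (hf : IsEnergyFunction f) (hg : IsEnergyFunction g)
    {h : ℕ → EnergyVal → EnergyVal} (hfg : ∀ i, h i = f ∨ h i = g) {x : EnergyVal}
    (hprod : iProd h x) : omegaFn (fun y => f y ⊔ g y) x := by
  refine ⟨hprod 0, le_of_not_gt fun hlt => ?_⟩
  lift x to ℝ≥0∞ using hprod 0
  rcases eq_or_ne x ⊤ with rfl | hx
  · have hf_bot := hf.eq_bot_of_ne_top (lt_of_le_of_lt le_sup_left hlt).ne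
    have hg_bot := hg.eq_bot_of_ne_top (lt_of_le_of_lt le_sup_right hlt).ne
    apply hprod 1
    rcases hfg 0 with h0 | h0 <;> simp [prodSeq, h0, hf_bot, hg_bot]
  obtain ⟨δ, hδ, hgap⟩ := exists_add_le_of_lt hlt
  refine not_iProd_of_add_le hx hδ (fun n y hy => ?_) hprod
  rcases hfg n with hn | hn <;> rw [hn]
  · exact hf.add_le_of_le hx (le_trans (by gcongr; exact le_sup_left) hgap) hy
  · exact hg.add_le_of_le hx (le_trans (by gcongr; exact le_sup_right) hgap) hy

end

/-- For all extended energy functions `f, g`: `(f ∨ g)^ω` is the supremum, over all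
infinite sequences `h₀, h₁, …` with each `h_i ∈ {f, g}`, of the infinite product
`Π_{i=0}^∞ h_i` (suprema in `V` being pointwise, i.e. existential). -/
theorem stmt14 (f g : EnergyVal → EnergyVal)
    (hf : IsEnergyFunction f) (hg : IsEnergyFunction g) :
    omegaFn (fun x => f x ⊔ g x) =
      fun x => ∃ h : ℕ → EnergyVal → EnergyVal, (∀ i, h i = f ∨ h i = g) ∧ iProd h x := by
  funext x
  apply propext
  constructor
  · exact exists_iProd_of_omegaFn_sup hf hg
  · rintro ⟨h, hfg, hprod⟩
    exact omegaFn_sup_of_iProd hf hg hfg hprod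
end

section
/- Let (S, T) be an energy automaton with finitely many transitions, and define T' = {(s, sup{f | (s,f,s') ∈ T}, s') | s, s' ∈ S}, where sup ∅ is the constant-⊥ function, so that T' has exactly one transition between each ordered pair of states. Then for every initial state s₀ ∈ S, every set of accepting states F ⊆ S, and every x₀ ∈ [0,∞): (S,T) admits a finite run from (s₀,x₀) ending in a state of F if and only if (S,T') does; and (S,T) admits an infinite run from (s₀,x₀) visiting F infinitely often if and only if (S,T') does. -/
/-
Raising every transition label from `s` to `s'` to the supremum of these labels can only
raise energies, since energy functions are monotone; so a run of `(S, T)` is dominated by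
the run of `(S, T')` through the same states, which therefore also stays away from `⊥`.
Conversely, a supremum of finitely many labels is attained by one of them as soon as it is
not `⊥`, so every step of a run of `(S, T')` is already a step of `(S, T)`.
-/

open scoped ENNReal NNReal

/-- The pointwise supremum `sup { f | (s, f, s') ∈ T }` of the labels of all
transitions from `s` to `s'` (the constant-`⊥` function if there are none). -/
noncomputable def supLabel {S : Type} (T : Set (S × (EnergyVal → EnergyVal) × S))
    (s s' : S) : EnergyVal → EnergyVal :=
  fun x => sSup {y | ∃ f, (s, f, s') ∈ T ∧ y = f x}

/-- There is a finite run of the energy automaton `(S, T)` from `(s₀, x₀)` ending in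
a state of `F`. -/
def FinAccept {S : Type} (T : Set (S × (EnergyVal → EnergyVal) × S))
    (s₀ : S) (F : Set S) (x₀ : EnergyVal) : Prop :=
  ∃ (m : ℕ) (σ : ℕ → S) (ξ : ℕ → EnergyVal),
    σ 0 = s₀ ∧ ξ 0 = x₀ ∧
    (∀ t, t < m → ∃ f, (σ t, f, σ (t + 1)) ∈ T ∧ ξ (t + 1) = f (ξ t)) ∧
    (∀ t, t ≤ m → ξ t ≠ ⊥) ∧ σ m ∈ F

/-- There is an infinite run of the energy automaton `(S, T)` from `(s₀, x₀)`
visiting `F` infinitely often. -/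
def BuchiAccept {S : Type} (T : Set (S × (EnergyVal → EnergyVal) × S))
    (s₀ : S) (F : Set S) (x₀ : EnergyVal) : Prop :=
  ∃ (σ : ℕ → S) (ξ : ℕ → EnergyVal),
    σ 0 = s₀ ∧ ξ 0 = x₀ ∧
    (∀ t, ∃ f, (σ t, f, σ (t + 1)) ∈ T ∧ ξ (t + 1) = f (ξ t)) ∧
    (∀ t, ξ t ≠ ⊥) ∧ (∀ N, ∃ t, N ≤ t ∧ σ t ∈ F)

theorem IsEnergyFunction.monotone_s16 {f : EnergyVal → EnergyVal} (hf : IsEnergyFunction f) :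
    Monotone f := by
  intro x y hxy
  induction x using WithBot.recBotCoe with
  | bot => rw [hf.1]; exact bot_le
  | coe a =>
    induction y using WithBot.recBotCoe with
    | bot => exact absurd hxy (by simp)
    | coe b =>
      have hab : a ≤ b := by exact_mod_cast hxy
      exact (le_add_of_nonneg_right (WithBot.coe_nonneg.mpr zero_le)).trans (hf.2.1 a b hab)

section SupTransitions

variable {S : Type} {T : Set (S × (EnergyVal → EnergyVal) × S)}

/-- The transition set `T'`. -/
def supTransitions (T : Set (S × (EnergyVal → EnergyVal) × S)) :
    Set (S × (EnergyVal → EnergyVal) × S) :=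
  {p | p.2.1 = supLabel T p.1 p.2.2}

theorem le_supLabel {s s' : S} {f : EnergyVal → EnergyVal} (hf : (s, f, s') ∈ T)
    (x : EnergyVal) : f x ≤ supLabel T s s' x :=
  le_sSup ⟨f, hf, rfl⟩

theorem exists_mem_supLabel_eq_of_ne_bot (hT : T.Finite) {s s' : S} {x : EnergyVal}
    (h : supLabel T s s' x ≠ ⊥) : ∃ f, (s, f, s') ∈ T ∧ supLabel T s s' x = f x := by
  set A : Set EnergyVal := {y | ∃ f, (s, f, s') ∈ T ∧ y = f x}
  have hA : A.Finite :=
    (hT.image fun p => p.2.1 x).subset fun _ ⟨f, hf, hy⟩ => ⟨(s, f, s'), hf, hy.symm⟩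
  have hA' : A.Nonempty := by
    by_contra hempty
    exact h (by simp [supLabel, A, Set.not_nonempty_iff_eq_empty.mp hempty])
  exact hA'.csSup_mem hA

theorem exists_mem_eq_of_mem_supTransitions (hT : T.Finite) {s s' : S}
    {f : EnergyVal → EnergyVal} (hf : (s, f, s') ∈ supTransitions T) {x : EnergyVal}
    (hx : f x ≠ ⊥) : ∃ g, (s, g, s') ∈ T ∧ f x = g x := by
  change f = supLabel T s s' at hf
  subst hf
  exact exists_mem_supLabel_eq_of_ne_bot hT hx

noncomputable def supRun (T : Set (S × (EnergyVal → EnergyVal) × S)) (σ : ℕ → S)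
    (x₀ : EnergyVal) : ℕ → EnergyVal
  | 0 => x₀
  | t + 1 => supLabel T (σ t) (σ (t + 1)) (supRun T σ x₀ t)

theorem supRun_step (σ : ℕ → S) (x₀ : EnergyVal) (t : ℕ) :
    ∃ f, (σ t, f, σ (t + 1)) ∈ supTransitions T ∧
      supRun T σ x₀ (t + 1) = f (supRun T σ x₀ t) :=
  ⟨supLabel T (σ t) (σ (t + 1)), rfl, rfl⟩

theorem le_supRun (hTE : ∀ p ∈ T, IsEnergyFunction p.2.1) {σ : ℕ → S} {ξ : ℕ → EnergyVal}
    {m : ℕ} (hstep : ∀ t < m, ∃ f, (σ t, f, σ (t + 1)) ∈ T ∧ ξ (t + 1) = f (ξ t)) :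
    ∀ t ≤ m, ξ t ≤ supRun T σ (ξ 0) t := by
  intro t
  induction t with
  | zero => exact fun _ => le_rfl
  | succ t ih =>
    intro ht
    obtain ⟨f, hf, hξ⟩ := hstep t ht
    calc ξ (t + 1) = f (ξ t) := hξ
      _ ≤ f (supRun T σ (ξ 0) t) := (hTE _ hf).monotone_s16 (ih (by omega))
      _ ≤ supRun T σ (ξ 0) (t + 1) := le_supLabel hf _

theorem finAccept_supTransitions_iff (hT : T.Finite) (hTE : ∀ p ∈ T, IsEnergyFunction p.2.1)
    {s₀ : S} {F : Set S} {x₀ : EnergyVal} :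
    FinAccept T s₀ F x₀ ↔ FinAccept (supTransitions T) s₀ F x₀ := by
  constructor
  · rintro ⟨m, σ, ξ, hσ₀, rfl, hstep, hξ, hF⟩
    exact ⟨m, σ, supRun T σ (ξ 0), hσ₀, rfl, fun t _ => supRun_step σ _ t,
      fun t ht => ne_bot_of_le_ne_bot (hξ t ht) (le_supRun hTE hstep t ht), hF⟩
  · rintro ⟨m, σ, ξ, hσ₀, hξ₀, hstep, hξ, hF⟩
    refine ⟨m, σ, ξ, hσ₀, hξ₀, fun t ht => ?_, hξ, hF⟩
    obtain ⟨f, hf, hξf⟩ := hstep t ht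
    obtain ⟨g, hg, hfg⟩ := exists_mem_eq_of_mem_supTransitions hT hf (hξf ▸ hξ (t + 1) ht)
    exact ⟨g, hg, hξf.trans hfg⟩

theorem buchiAccept_supTransitions_iff (hT : T.Finite) (hTE : ∀ p ∈ T, IsEnergyFunction p.2.1)
    {s₀ : S} {F : Set S} {x₀ : EnergyVal} :
    BuchiAccept T s₀ F x₀ ↔ BuchiAccept (supTransitions T) s₀ F x₀ := by
  constructor
  · rintro ⟨σ, ξ, hσ₀, rfl, hstep, hξ, hF⟩
    exact ⟨σ, supRun T σ (ξ 0), hσ₀, rfl, supRun_step σ _, fun t => ne_bot_of_le_ne_bot (hξ t)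
      (le_supRun (m := t) hTE (fun t _ => hstep t) t le_rfl), hF⟩
  · rintro ⟨σ, ξ, hσ₀, hξ₀, hstep, hξ, hF⟩
    refine ⟨σ, ξ, hσ₀, hξ₀, fun t => ?_, hξ, hF⟩
    obtain ⟨f, hf, hξf⟩ := hstep t
    obtain ⟨g, hg, hfg⟩ := exists_mem_eq_of_mem_supTransitions hT hf (hξf ▸ hξ (t + 1))
    exact ⟨g, hg, hξf.trans hfg⟩

end SupTransitions

theorem stmt16_general {S : Type}
    (T : Set (S × (EnergyVal → EnergyVal) × S)) (hTfin : T.Finite)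
    (hTE : ∀ p ∈ T, IsEnergyFunction p.2.1)
    (s₀ : S) (F : Set S) (x₀ : ℝ≥0∞) :
    (FinAccept T s₀ F ↑x₀ ↔
      FinAccept {p | p.2.1 = supLabel T p.1 p.2.2} s₀ F ↑x₀) ∧
    (BuchiAccept T s₀ F ↑x₀ ↔
      BuchiAccept {p | p.2.1 = supLabel T p.1 p.2.2} s₀ F ↑x₀) :=
  ⟨finAccept_supTransitions_iff hTfin hTE, buchiAccept_supTransitions_iff hTfin hTE⟩

/-- Replacing all transitions of an energy automaton `(S, T)` between each ordered
pair of states by a single transition labeled with the pointwise supremum of their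
labels (`sup ∅ = ⊥̄`) changes neither reachability nor Büchi acceptance. -/
theorem stmt16 {S : Type} [Fintype S]
    (T : Set (S × (EnergyVal → EnergyVal) × S)) (hTfin : T.Finite)
    (hTE : ∀ p ∈ T, IsEnergyFunction p.2.1)
    (s₀ : S) (F : Set S) (x₀ : ℝ≥0∞) (hx₀ : x₀ ≠ ⊤) :
    (FinAccept T s₀ F ↑x₀ ↔
      FinAccept {p | p.2.1 = supLabel T p.1 p.2.2} s₀ F ↑x₀) ∧
    (BuchiAccept T s₀ F ↑x₀ ↔
      BuchiAccept {p | p.2.1 = supLabel T p.1 p.2.2} s₀ F ↑x₀) :=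
  stmt16_general T hTfin hTE s₀ F x₀
end

section
/- For any extended energy function f ∈ E and any real x ∈ [0,∞) with f(x) < x, the iterates of f at x eventually reach ⊥: there exists N ∈ ℕ such that fⁿ(x) = ⊥ for all n ≥ N (equivalently, lim_{n→∞} fⁿ(x) = ⊥). -/
open scoped ENNReal NNReal

/-!
Write `f x = y < x` and `δ = x - y > 0`. For `a ≤ x` with `f a = b ≠ ⊥`, the defining
inequality `f a + (x - a) ≤ f x` gives `b + δ ≤ a`, so every step of the iteration that stays
above `⊥` loses at least `δ`. The `n`-th iterate, while real, is therefore at most `x - n δ`,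
which is impossible once `n δ > x`; and `⊥` is a fixed point of `f`.
-/

namespace IsEnergyFunction

variable {f : EnergyVal → EnergyVal}

theorem iterate_eq_bot_of_le (hf : IsEnergyFunction f) {a : EnergyVal} {N n : ℕ}
    (hN : f^[N] a = ⊥) (hn : N ≤ n) : f^[n] a = ⊥ := by
  rw [← Nat.sub_add_cancel hn, Function.iterate_add_apply, hN, Function.iterate_fixed hf.1]

theorem apply_add_tsub_apply_le (hf : IsEnergyFunction f) {a b x y : ℝ≥0∞} (hax : a ≤ x)
    (ha : f a = b) (hx : f x = y) (hyx : y ≤ x) (hy : y ≠ ⊤) : b + (x - y) ≤ a := by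
  have hdrop : b + (x - a) ≤ y := by
    have := hf.2.1 a x hax
    rwa [ha, hx, ← WithBot.coe_add, WithBot.coe_le_coe] at this
  rw [← ENNReal.add_le_add_iff_right hy]
  calc b + (x - y) + y = b + (x - a) + a := by
        rw [add_assoc, add_assoc, tsub_add_cancel_of_le hyx, tsub_add_cancel_of_le hax]
    _ ≤ y + a := by gcongr
    _ = a + y := add_comm y a

theorem coe_add_mul_le_of_iterate_eq_coe (hf : IsEnergyFunction f) {x y : ℝ≥0∞}
    (hx : f x = y) (hyx : y ≤ x) (hy : y ≠ ⊤) :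
    ∀ (n : ℕ) (z : ℝ≥0∞), f^[n] x = z → z + n * (x - y) ≤ x := by
  intro n
  induction n with
  | zero =>
    intro z hz
    rw [Function.iterate_zero_apply, WithBot.coe_inj] at hz
    simp [hz]
  | succ n ih =>
    intro w hw
    rw [Function.iterate_succ_apply'] at hw
    obtain ⟨z, hz⟩ : ∃ z : ℝ≥0∞, f^[n] x = z := by
      cases h : f^[n] (x : EnergyVal) using WithBot.recBotCoe with
      | bot => rw [h, hf.1] at hw; exact absurd hw WithBot.bot_ne_coe
      | coe z => exact ⟨z, rfl⟩
    rw [hz] at hw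
    have hzx := ih z hz
    calc w + ↑(n + 1) * (x - y) = w + (x - y) + n * (x - y) := by push_cast; ring
      _ ≤ z + n * (x - y) := by
        gcongr; exact hf.apply_add_tsub_apply_le (le_self_add.trans hzx) hw hx hyx hy
      _ ≤ x := hzx

theorem exists_iterate_eq_bot (hf : IsEnergyFunction f) {x y : ℝ≥0∞} (hxt : x ≠ ⊤)
    (hx : f x = y) (hyx : y < x) : ∃ N : ℕ, f^[N] x = ⊥ := by
  obtain ⟨N, hN⟩ := ENNReal.exists_nat_mul_gt (tsub_pos_of_lt hyx).ne' hxt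
  refine ⟨N, ?_⟩
  cases h : f^[N] (x : EnergyVal) using WithBot.recBotCoe with
  | bot => rfl
  | coe z =>
    have := hf.coe_add_mul_le_of_iterate_eq_coe hx hyx.le (hyx.trans_le le_top).ne N z h
    exact absurd (le_add_self.trans this) hN.not_ge

end IsEnergyFunction

/-- For any extended energy function `f` and any real `x ∈ [0,∞)` with `f x < x`,
the iterates of `f` at `x` eventually reach `⊥`: there is `N ∈ ℕ` with `fⁿ x = ⊥`
for all `n ≥ N`. -/
theorem stmt19 (f : EnergyVal → EnergyVal) (hf : IsEnergyFunction f)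
    (x : ℝ≥0∞) (hx : x ≠ ⊤) (hlt : f ↑x < ↑x) :
    ∃ N : ℕ, ∀ n : ℕ, N ≤ n → f^[n] ↑x = ⊥ := by
  obtain ⟨N, hN⟩ : ∃ N : ℕ, f^[N] x = ⊥ := by
    cases hy : f x using WithBot.recBotCoe with
    | bot => exact ⟨1, hy⟩
    | coe y =>
      rw [hy, WithBot.coe_lt_coe] at hlt
      exact hf.exists_iterate_eq_bot hx hy hlt
  exact ⟨N, fun n hn => hf.iterate_eq_bot_of_le hN hn⟩
end
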